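/- arXiv:2109.09931 — 2 statements merged into one kernel-verified Lean document; each statement's English description precedes it below -/
import Mathlib

section
/- Let r ≥ 2, n ≥ 2r, and let H be an M_1^{(r)}-saturated r-cgh on Ω_n. Then: (1) every vertex of Ω_n has positive degree in H, so that λ(v_i) and ρ(v_i) are well defined for every vertex v_i; (2) for all v_i, λ(v_i) ∉ [v_{i-r+2}, v_{i+r-1}] and ρ(v_i) ∉ [v_{i-r+1}, v_{i+r-2}]; (3) for all v_i, the cyclic order λ(v_i) < v_i < ρ(v_i) ≤ λ(v_i) holds; and (4) if v_j ∈ [ρ(v_i), λ(v_i)], then every r-element subset of Ω_n containing both v_i and v_j is an edge of H. -/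
open Finset

/-- An abstract convex geometric hypergraph: `m` vertices on a circle, with the
cyclic ordering `0 < 1 < ⋯ < m-1 < 0`, together with a family of edges. -/
structure CGH where
  m : ℕ
  edges : Finset (Finset (Fin m))

/-- A list of points of `Fin n` is in (strict) cyclic order if some rotation of it
is strictly increasing in the linear order of `Fin n`. -/
def CyclicSorted {n : ℕ} (l : List (Fin n)) : Prop :=
  ∃ k : ℕ, (l.rotate k).Chain' (· < ·)

/-- `H` contains a subhypergraph isomorphic to the convex geometric hypergraph `F`:
there is an injection of the vertices of `F` into `Fin n` respecting the cyclic
orderings and sending every edge of `F` to an edge of `H`. -/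
def HasCopy (F : CGH) {n : ℕ} (H : Finset (Finset (Fin n))) : Prop :=
  ∃ f : Fin F.m → Fin n, Function.Injective f ∧ CyclicSorted (List.ofFn f) ∧
    ∀ e ∈ F.edges, e.image f ∈ H

/-- `H` is an `F`-saturated `r`-uniform convex geometric hypergraph on `Fin n`. -/
def IsSat (F : CGH) (r : ℕ) {n : ℕ} (H : Finset (Finset (Fin n))) : Prop :=
  (∀ h ∈ H, h.card = r) ∧ ¬ HasCopy F H ∧
    ∀ e : Finset (Fin n), e.card = r → e ∉ H → HasCopy F (insert e H)

/-- The saturation number `sat_○(n, F)` for `r`-uniform cgh's on `Fin n`. -/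
noncomputable def satNum (F : CGH) (r n : ℕ) : ℕ :=
  sInf {k | ∃ H : Finset (Finset (Fin n)), IsSat F r H ∧ H.card = k}

/-- `M_1^{(r)}`: two geometrically disjoint `r`-tuples. -/
def M1r (r : ℕ) : CGH where
  m := 2 * r
  edges := {Finset.univ.filter (fun i : Fin (2 * r) => (i : ℕ) < r),
            Finset.univ.filter (fun i : Fin (2 * r) => r ≤ (i : ℕ))}

def M1cgh : CGH := ⟨6, {({0, 1, 2} : Finset (Fin 6)), ({3, 4, 5} : Finset (Fin 6))}⟩
def M2cgh : CGH := ⟨6, {({0, 1, 3} : Finset (Fin 6)), ({2, 4, 5} : Finset (Fin 6))}⟩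
def M3cgh : CGH := ⟨6, {({0, 2, 4} : Finset (Fin 6)), ({1, 3, 5} : Finset (Fin 6))}⟩
def S1cgh : CGH := ⟨5, {({0, 1, 4} : Finset (Fin 5)), ({0, 2, 3} : Finset (Fin 5))}⟩
def S2cgh : CGH := ⟨5, {({0, 1, 2} : Finset (Fin 5)), ({0, 3, 4} : Finset (Fin 5))}⟩
def S3cgh : CGH := ⟨5, {({0, 1, 3} : Finset (Fin 5)), ({0, 2, 4} : Finset (Fin 5))}⟩
def D1cgh : CGH := ⟨4, {({0, 1, 2} : Finset (Fin 4)), ({0, 2, 3} : Finset (Fin 4))}⟩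
def D2cgh : CGH := ⟨4, {({0, 1, 2} : Finset (Fin 4)), ({0, 1, 3} : Finset (Fin 4))}⟩

/-- The closed clockwise arc `[a, b]` in `Fin n`. -/
def arcCC {n : ℕ} (a b : Fin n) : Finset (Fin n) :=
  if a ≤ b then Finset.univ.filter (fun x => a ≤ x ∧ x ≤ b)
  else Finset.univ.filter (fun x => a ≤ x ∨ x ≤ b)

/-- The open clockwise arc `(a, b)` in `Fin n`. -/
def arcOO {n : ℕ} (a b : Fin n) : Finset (Fin n) :=
  if a < b then Finset.univ.filter (fun x => a < x ∧ x < b)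
  else Finset.univ.filter (fun x => a < x ∨ x < b)

/-- The tuple `(w_1, …, w_{2ℓ+1})` (`0`-indexed here) consists of distinct points with
`w_1 < w_3 < ⋯ < w_{2ℓ+1} < w_2 < w_4 < ⋯ < w_{2ℓ} < w_1` in the cyclic order. -/
def SemiValid {n : ℕ} (ℓ : ℕ) (w : Fin (2 * ℓ + 1) → Fin n) : Prop :=
  Function.Injective w ∧
    CyclicSorted (List.ofFn fun p : Fin (2 * ℓ + 1) =>
      w ⟨(2 * (p : ℕ)) % (2 * ℓ + 1), Nat.mod_lt _ (by omega)⟩)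

/-- A semi-valid tuple is `r`-valid if moreover `|[w_i, w_{i-1}]| ≥ r` for all `i`. -/
def RValid {n : ℕ} (r ℓ : ℕ) (w : Fin (2 * ℓ + 1) → Fin n) : Prop :=
  SemiValid ℓ w ∧ ∀ i : Fin (2 * ℓ + 1), r ≤ (arcCC (w i) (w (i - 1))).card

/-- `H_n^{(r)}(C)`: all `r`-sets meeting every interval `[w_i, w_{i-1}]`. -/
def HnC {n : ℕ} (r ℓ : ℕ) (w : Fin (2 * ℓ + 1) → Fin n) : Finset (Finset (Fin n)) :=
  (Finset.powersetCard r Finset.univ).filter fun e =>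
    ∀ i : Fin (2 * ℓ + 1), (e ∩ arcCC (w i) (w (i - 1))).Nonempty

/-- `j` is the vertex `λ(v)` for `v` in `H`. -/
def IsLam {n : ℕ} [NeZero n] (H : Finset (Finset (Fin n))) (v j : Fin n) : Prop :=
  (∃ h ∈ H, v ∈ h ∧ h ⊆ arcCC j v) ∧ ¬ ∃ h ∈ H, v ∈ h ∧ h ⊆ arcCC (j + 1) v

/-- `j` is the vertex `ρ(v)` for `v` in `H`. -/
def IsRho {n : ℕ} [NeZero n] (H : Finset (Finset (Fin n))) (v j : Fin n) : Prop :=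
  (∃ h ∈ H, v ∈ h ∧ h ⊆ arcCC v j) ∧ ¬ ∃ h ∈ H, v ∈ h ∧ h ⊆ arcCC v (j - 1)

noncomputable def lamF {n : ℕ} [NeZero n] (H : Finset (Finset (Fin n))) (v : Fin n) : Fin n :=
  letI := Classical.propDecidable (∃ j, IsLam H v j)
  if h : ∃ j, IsLam H v j then h.choose else v

noncomputable def rhoF {n : ℕ} [NeZero n] (H : Finset (Finset (Fin n))) (v : Fin n) : Fin n :=
  letI := Classical.propDecidable (∃ j, IsRho H v j)
  if h : ∃ j, IsRho H v j then h.choose else v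

/-- Strict cyclic betweenness on `Fin n`. -/
def CyclicSbtw {n : ℕ} (a b c : Fin n) : Prop :=
  (a < b ∧ b < c) ∨ (b < c ∧ c < a) ∨ (c < a ∧ a < b)

/-- Isomorphism of two cgh's on `Fin n`: a bijection of the vertex set respecting the
cyclic order and inducing a bijection of the edge sets. -/
def CGHIso {n : ℕ} (H H' : Finset (Finset (Fin n))) : Prop :=
  ∃ g : Fin n ≃ Fin n,
    (∀ a b c : Fin n, CyclicSbtw a b c → CyclicSbtw (g a) (g b) (g c)) ∧
    ∀ e : Finset (Fin n), e ∈ H ↔ e.image g ∈ H'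

/-- The 3-cgh `H_n^{(3)}`: all triples containing `v_0`, together with all triples
containing one of the pairs `{v_1, v_{n-2}}`, `{v_1, v_{n-1}}`, `{v_2, v_{n-1}}`. -/
def Hn3 (n : ℕ) (hn : 6 ≤ n) : Finset (Finset (Fin n)) :=
  (Finset.powersetCard 3 Finset.univ).filter fun e =>
    (⟨0, by omega⟩ : Fin n) ∈ e ∨
    ((⟨1, by omega⟩ : Fin n) ∈ e ∧ (⟨n - 2, by omega⟩ : Fin n) ∈ e) ∨
    ((⟨1, by omega⟩ : Fin n) ∈ e ∧ (⟨n - 1, by omega⟩ : Fin n) ∈ e) ∨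
    ((⟨2, by omega⟩ : Fin n) ∈ e ∧ (⟨n - 1, by omega⟩ : Fin n) ∈ e)

/-- Saturation with respect to a family of cgh's. -/
def FamSat (ℱ : Set CGH) (r : ℕ) {n : ℕ} (H : Finset (Finset (Fin n))) : Prop :=
  (∀ h ∈ H, h.card = r) ∧ (∀ F ∈ ℱ, ¬ HasCopy F H) ∧
    ∀ e : Finset (Fin n), e.card = r → e ∉ H → ∃ F ∈ ℱ, HasCopy F (insert e H)

noncomputable def famSatNum (ℱ : Set CGH) (r n : ℕ) : ℕ :=
  sInf {k | ∃ H : Finset (Finset (Fin n)), FamSat ℱ r H ∧ H.card = k}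

/-- Rotation of a point of `Fin n` by an integer amount `m`. -/
def finShift {n : ℕ} (hn : 0 < n) (v : Fin n) (m : ℤ) : Fin n :=
  ⟨(((v : ℤ) + m) % (n : ℤ)).toNat, by
    have h0 : (0 : ℤ) < (n : ℤ) := by exact_mod_cast hn
    have h1 := Int.emod_nonneg ((v : ℤ) + m) (by omega : (n : ℤ) ≠ 0)
    have h2 := Int.emod_lt_of_pos ((v : ℤ) + m) h0
    omega⟩

/-- The tuple `w` is `(i,k)`-consecutive: starting from position `i`, the entries at
positions `i, i+2, …, i+2(k-1)` are `k` consecutive points `v_j, v_{j+1}, …, v_{j+k-1}`. -/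
def ConsecAt {n ℓ : ℕ} (hn : 0 < n) (w : Fin (2 * ℓ + 1) → Fin n)
    (i : Fin (2 * ℓ + 1)) (k : ℕ) : Prop :=
  ∃ j : Fin n, ∀ s : ℕ, s < k →
    w (i + ⟨(2 * s) % (2 * ℓ + 1), Nat.mod_lt _ (by omega)⟩) = finShift hn j s

/-- The tuple `C_{i,k,m}`: the `k` consecutive points at positions `i, i+2, …, i+2(k-1)`
are rotated by `m` units; all other entries are unchanged. -/
def shiftTuple {n ℓ : ℕ} (hn : 0 < n) (w : Fin (2 * ℓ + 1) → Fin n)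
    (i : Fin (2 * ℓ + 1)) (k : ℕ) (m : ℤ) : Fin (2 * ℓ + 1) → Fin n :=
  fun p => if (p - i).val % 2 = 0 ∧ (p - i).val / 2 < k then finShift hn (w p) m else w p

/-!
A copy of `M_1^{(r)}` is the same thing as two edges lying in disjoint arcs of the circle
(`Separated`). So saturation says that no two edges of `H` are separated, while every non-edge
`r`-set is separated from some edge. In particular, if no edge lies inside either open arc cut
out by `v` and `t`, then every `r`-set through `v` and `t` is an edge: its separated partner would
have to lie in one of those arcs.

Let `t` be the point nearest to `v` clockwise such that some edge `B` lies in `[v, t]`. No edge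
lies in `(v, t)` by minimality, and none lies in `(t, v)`, since it would be separated from `B`.
Hence all `r`-sets through `v` and `t` are edges, which gives `ρ(v) = t` and, by counting points of
arcs, the bounds on `ρ(v)`. Reflecting the circle turns `λ` into `ρ`. An `r`-set through `v` and
`λ(v)` inside `[v, ρ(v) - 1]` would contradict the choice of `ρ(v)`, so `ρ(v) ≤ λ(v)`. Finally, for
`j` in `[ρ(v), λ(v)]` the edges witnessing `ρ(v)` and `λ(v)` lie in `[v, j]` and `[j, v]`, and the
same separation argument shows that every `r`-set through `v` and `j` is an edge.
-/

open Pointwise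

section

variable {n : ℕ}

lemma Fin.val_sub_eq_ite (a b : Fin n) :
    (a - b).val = if b.val ≤ a.val then a.val - b.val else a.val + n - b.val := by
  rw [Fin.val_sub]
  split_ifs with h
  · rw [show n - b.val + a.val = (a.val - b.val) + n by omega, Nat.add_mod_right,
      Nat.mod_eq_of_lt (by omega)]
  · rw [Nat.mod_eq_of_lt (by omega)]; omega

lemma mem_arcCC_iff {a b x : Fin n} : x ∈ arcCC a b ↔ (x - a).val ≤ (b - a).val := by
  unfold arcCC
  split_ifs <;>
  · simp only [Finset.mem_filter, Finset.mem_univ, true_and, Fin.le_def] at *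
    rw [Fin.val_sub_eq_ite, Fin.val_sub_eq_ite]
    split_ifs <;> omega

lemma right_mem_arcCC {a b : Fin n} : b ∈ arcCC a b := mem_arcCC_iff.mpr le_rfl

lemma mem_arcOO_iff_notMem_arcCC {a b x : Fin n} : x ∈ arcOO a b ↔ x ∉ arcCC b a := by
  unfold arcOO arcCC
  split_ifs <;>
  · simp only [Finset.mem_filter, Finset.mem_univ, true_and, Fin.le_def, Fin.lt_def] at *
    omega

lemma arcOO_eq_compl (a b : Fin n) : arcOO a b = (arcCC b a)ᶜ := by
  ext x; rw [mem_arcOO_iff_notMem_arcCC, Finset.mem_compl]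

lemma Fin.val_sub_add_val_sub {a b : Fin n} (h : a ≠ b) : (a - b).val + (b - a).val = n := by
  have : a.val ≠ b.val := fun h' => h (Fin.ext h')
  rw [Fin.val_sub_eq_ite, Fin.val_sub_eq_ite]
  split_ifs <;> omega

end

section

variable {n : ℕ} [NeZero n]

lemma Fin.val_sub_eq_ite_of_base (c a x : Fin n) :
    (x - a).val = if (a - c).val ≤ (x - c).val then (x - c).val - (a - c).val
      else (x - c).val + n - (a - c).val := by
  rw [← Fin.val_sub_eq_ite, sub_sub_sub_cancel_right]

lemma Fin.val_neg_one_of_neZero : (-1 : Fin n).val = n - 1 := by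
  obtain ⟨m, rfl⟩ := Nat.exists_eq_succ_of_ne_zero (NeZero.ne n)
  simp [Fin.coe_neg_one]

lemma Fin.val_sub_one_sub {a b : Fin n} (h : b ≠ a) : (b - 1 - a).val = (b - a).val - 1 := by
  obtain ⟨m, rfl⟩ := Nat.exists_eq_succ_of_ne_zero (NeZero.ne n)
  rw [sub_right_comm, Fin.coe_sub_one, if_neg (sub_ne_zero.mpr h)]

lemma Fin.val_add_one_sub {a b : Fin n} (h : (b - a).val + 1 < n) :
    (b + 1 - a).val = (b - a).val + 1 := by
  obtain ⟨m, rfl⟩ := Nat.exists_eq_succ_of_ne_zero (NeZero.ne n)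
  rw [add_sub_right_comm, Fin.val_add_one_of_lt (Fin.lt_last_iff_ne_last.mpr ?_)]
  intro h'; rw [h', Fin.val_last] at h; omega

lemma left_mem_arcCC {a b : Fin n} : a ∈ arcCC a b := by simp [mem_arcCC_iff]

lemma mem_arcCC_iff_of_le (c : Fin n) {a b x : Fin n} (hab : (a - c).val ≤ (b - c).val) :
    x ∈ arcCC a b ↔ (a - c).val ≤ (x - c).val ∧ (x - c).val ≤ (b - c).val := by
  rw [mem_arcCC_iff, Fin.val_sub_eq_ite_of_base c a x, Fin.val_sub_eq_ite_of_base c a b]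
  have := (x - c).isLt; have := (b - c).isLt
  split_ifs <;> omega

lemma arcCC_subset_arcCC (c : Fin n) {a b a' b' : Fin n} (h₁ : (a - c).val ≤ (a' - c).val)
    (h₂ : (a' - c).val ≤ (b' - c).val) (h₃ : (b' - c).val ≤ (b - c).val) :
    arcCC a' b' ⊆ arcCC a b := fun x hx => by
  rw [mem_arcCC_iff_of_le c h₂] at hx
  rw [mem_arcCC_iff_of_le c (by omega)]
  omega

lemma mem_arcOO_of_val_sub_le {v a b : Fin n} (hb : 0 < (b - v).val)
    (hba : (b - v).val ≤ (a - v).val) : v ∈ arcOO a b := by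
  rw [mem_arcOO_iff_notMem_arcCC, mem_arcCC_iff_of_le v hba, sub_self, Fin.val_zero]
  omega

lemma arcOO_subset_arcCC_sub_one {a b : Fin n} (hba : b ≠ a) : arcOO a b ⊆ arcCC a (b - 1) := by
  intro x hx
  have hb : (b - a).val ≠ 0 := fun h => hba (sub_eq_zero.mp (Fin.ext h))
  rw [mem_arcOO_iff_notMem_arcCC, mem_arcCC_iff, Fin.val_sub_eq_ite_of_base a b x,
    Fin.val_sub_eq_ite_of_base a b a, sub_self, Fin.val_zero] at hx
  rw [mem_arcCC_iff, Fin.val_sub_one_sub hba]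
  split_ifs at hx <;> omega

lemma compl_arcCC {a b : Fin n} (h : (b - a).val + 1 < n) :
    (arcCC a b)ᶜ = arcCC (b + 1) (a - 1) := by
  ext x
  have hb1 := Fin.val_add_one_sub h
  have ha1 : (a - 1 - a).val = n - 1 := by rw [sub_sub_cancel_left, Fin.val_neg_one_of_neZero]
  rw [Finset.mem_compl, mem_arcCC_iff, mem_arcCC_iff_of_le a (by omega), hb1, ha1]
  have := (x - a).isLt
  omega

lemma card_arcCC (a b : Fin n) : (arcCC a b).card = (b - a).val + 1 := by
  have : arcCC a b = (Finset.Iic (b - a)).image (· + a) := by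
    ext x
    simp only [mem_arcCC_iff, Finset.mem_image, Finset.mem_Iic]
    exact ⟨fun h => ⟨x - a, Fin.le_def.mpr h, sub_add_cancel x a⟩,
      by rintro ⟨y, hy, rfl⟩; simpa using hy⟩
  rw [this, Finset.card_image_of_injective _ (add_left_injective a), Fin.card_Iic]

lemma card_arcOO (a b : Fin n) : (arcOO a b).card = n - 1 - (a - b).val := by
  rw [arcOO_eq_compl, Finset.card_compl, card_arcCC, Fintype.card_fin]; omega

lemma neg_arcCC (a b : Fin n) : -arcCC a b = arcCC (-b) (-a) := by
  ext x
  rw [Finset.mem_neg', mem_arcCC_iff, mem_arcCC_iff, show x - -b = (b - a) - (-x - a) by abel,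
    show -a - -b = b - a by abel, Fin.val_sub_eq_ite (b - a)]
  have := (-x - a).isLt
  split_ifs <;> omega

lemma neg_arcOO (a b : Fin n) : -arcOO a b = arcOO (-b) (-a) := by
  ext x
  rw [Finset.mem_neg', mem_arcOO_iff_notMem_arcCC, mem_arcOO_iff_notMem_arcCC, ← neg_arcCC,
    Finset.mem_neg']

open Fin.NatCast in
lemma mem_arcCC_sub_add_iff {v x : Fin n} {c c' : ℕ} (h : c + c' < n) :
    x ∈ arcCC (v - (c : Fin n)) (v + (c' : Fin n)) ↔ (x - v).val ≤ c' ∨ n - c ≤ (x - v).val := by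
  have hc : ((c : ℕ) : Fin n).val = c := by rw [Fin.val_natCast, Nat.mod_eq_of_lt (by omega)]
  have hc' : ((c' + c : ℕ) : Fin n).val = c' + c := by
    rw [Fin.val_natCast, Nat.mod_eq_of_lt (by omega)]
  rw [mem_arcCC_iff, show x - (v - c) = (x - v) + c by abel,
    show v + c' - (v - c) = ((c' + c : ℕ) : Fin n) by push_cast; abel, Fin.val_add_eq_ite, hc, hc']
  have := (x - v).isLt
  split_ifs <;> omega

end

section

variable {n : ℕ}

def Separated (e h : Finset (Fin n)) : Prop :=
  ∃ a b, e ⊆ arcCC a b ∧ h ⊆ arcOO b a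

lemma Separated.disjoint {e h : Finset (Fin n)} (hs : Separated e h) : Disjoint e h := by
  obtain ⟨a, b, he, hh⟩ := hs
  rw [arcOO_eq_compl] at hh
  exact Finset.disjoint_of_subset_left he
    (Finset.disjoint_of_subset_right hh disjoint_compl_right)

variable [NeZero n]

lemma Separated.symm {e h : Finset (Fin n)} (hh : h.Nonempty) (hs : Separated e h) :
    Separated h e := by
  obtain ⟨a, b, he, hh'⟩ := hs
  obtain ⟨z, hz⟩ := hh
  have hlt : (b - a).val + 1 < n := by
    have := hh' hz
    rw [mem_arcOO_iff_notMem_arcCC, mem_arcCC_iff] at this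
    have := (z - a).isLt
    omega
  refine ⟨b + 1, a - 1, ?_, ?_⟩
  · rw [← compl_arcCC hlt, ← arcOO_eq_compl]; exact hh'
  · rw [arcOO_eq_compl, ← compl_arcCC hlt, compl_compl]; exact he

lemma Separated.neg {e h : Finset (Fin n)} (hs : Separated e h) : Separated (-e) (-h) := by
  obtain ⟨a, b, he, hh⟩ := hs
  exact ⟨-b, -a, neg_arcCC a b ▸ Finset.neg_subset_neg he,
    neg_arcOO b a ▸ Finset.neg_subset_neg hh⟩

lemma Separated.subset_arcOO_or {e h : Finset (Fin n)} (hs : Separated e h) {v t : Fin n}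
    (hv : v ∈ e) (ht : t ∈ e) (hvt : v ≠ t) : h ⊆ arcOO v t ∨ h ⊆ arcOO t v := by
  obtain ⟨a, b, he, hh⟩ := hs
  have key : ∀ {v t}, t ∈ e → (v - a).val < (t - a).val → h ⊆ arcOO t v := fun ht hlt x hx => by
    have hta := mem_arcCC_iff.mp (he ht)
    have hxa := hh hx
    rw [mem_arcOO_iff_notMem_arcCC, mem_arcCC_iff] at hxa
    rw [mem_arcOO_iff_notMem_arcCC, mem_arcCC_iff_of_le a hlt.le]
    omega
  have hne : (v - a).val ≠ (t - a).val := fun h' => hvt (sub_left_injective (Fin.ext h'))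
  rcases Nat.lt_or_gt_of_ne hne with hlt | hlt
  exacts [.inr (key ht hlt), .inl (key hv hlt)]

end

section

variable {m n : ℕ}

lemma List.ofFn_rotate_val {α : Type*} [NeZero m] (f : Fin m → α) (k : Fin m) :
    (List.ofFn f).rotate k.val = List.ofFn fun i => f (i + k) := by
  apply List.ext_getElem (by simp)
  intro i h1 h2
  simp only [List.getElem_rotate, List.getElem_ofFn, List.length_ofFn]
  congr 1

lemma cyclicSorted_ofFn_iff [NeZero m] (f : Fin m → Fin n) :
    CyclicSorted (List.ofFn f) ↔ ∃ k : Fin m, StrictMono fun i => f (i + k) := by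
  unfold CyclicSorted
  constructor
  · rintro ⟨k, hk⟩
    refine ⟨⟨k % m, Nat.mod_lt _ (NeZero.pos m)⟩, ?_⟩
    rw [← List.sortedLT_ofFn_iff, ← List.ofFn_rotate_val, List.sortedLT_iff_isChain]
    have hmod := List.rotate_mod (List.ofFn f) k
    rw [List.length_ofFn] at hmod
    rwa [hmod]
  · rintro ⟨k, hk⟩
    refine ⟨k.val, ?_⟩
    rw [List.ofFn_rotate_val]
    exact hk.sortedLT_ofFn.isChain

variable [NeZero n]

lemma StrictMono.rotate_val_sub {f : Fin m → Fin n} {c : Fin n}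
    (hf : StrictMono fun i => (f i - c).val) (p : Fin m) :
    StrictMono fun i => (f (i + p) - f p).val := by
  intro x y hxy
  have hmono : ∀ i j : Fin m, (f i - c).val ≤ (f j - c).val ↔ i.val ≤ j.val :=
    fun i j => (hf.le_iff_le).trans Fin.le_def
  have h1 := hmono p (x + p); have h2 := hmono p (y + p); have h3 := hmono (x + p) (y + p)
  have h4 := hmono (y + p) (x + p)
  simp only [Fin.val_add_eq_ite] at h1 h2 h3 h4
  rw [Fin.lt_def] at hxy
  dsimp only
  rw [Fin.val_sub_eq_ite_of_base c (f p) (f (x + p)),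
    Fin.val_sub_eq_ite_of_base c (f p) (f (y + p))]
  have := (f (x + p) - c).isLt; have := (f (y + p) - c).isLt
  have := x.isLt; have := y.isLt; have := p.isLt
  split_ifs at h1 h2 h3 h4 ⊢ <;> omega

lemma CyclicSorted.strictMono_val_sub [NeZero m] {f : Fin m → Fin n}
    (hf : CyclicSorted (List.ofFn f)) : StrictMono fun i => (f i - f 0).val := by
  obtain ⟨k, hk⟩ := (cyclicSorted_ofFn_iff f).mp hf
  have h0 : StrictMono fun i => (f (i + k) - 0).val := fun x y hxy => by
    simpa only [sub_zero] using Fin.lt_def.mp (hk hxy)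
  simpa using h0.rotate_val_sub (-k)

lemma cyclicSorted_ofFn_of_strictMono [NeZero m] {f : Fin m → Fin n} {c : Fin n}
    (hf : StrictMono fun i => (f i - c).val) : CyclicSorted (List.ofFn f) := by
  obtain ⟨k, -, hk⟩ := Finset.exists_min_image Finset.univ f Finset.univ_nonempty
  refine (cyclicSorted_ofFn_iff f).mpr ⟨k, fun x y hxy => ?_⟩
  have := hf.rotate_val_sub k hxy
  simp only [Fin.sub_val_of_le (hk _ (Finset.mem_univ _))] at this
  exact show f (x + k) < f (y + k) from Fin.lt_def.mpr (by omega)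

end

lemma card_filter_val_lt_two_mul {r : ℕ} :
    (Finset.univ.filter fun i : Fin (2 * r) => (i : ℕ) < r).card = r := by
  rw [Fin.card_filter_val_lt]; omega

lemma card_filter_le_val_two_mul {r : ℕ} :
    (Finset.univ.filter fun i : Fin (2 * r) => r ≤ (i : ℕ)).card = r := by
  have := Finset.card_filter_add_card_filter_not (s := Finset.univ)
    (p := fun i : Fin (2 * r) => (i : ℕ) < r)
  simp only [not_lt, Finset.card_univ, Fintype.card_fin, card_filter_val_lt_two_mul] at this
  omega

lemma exists_strictMono_concat {α : Type*} [LinearOrder α] {r : ℕ} {E F : Finset α}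
    (cE : E.card = r) (cF : F.card = r) (hEF : ∀ x ∈ E, ∀ y ∈ F, x < y) :
    ∃ g : Fin (2 * r) → α, StrictMono g ∧
      (Finset.univ.filter fun i : Fin (2 * r) => (i : ℕ) < r).image g = E ∧
      (Finset.univ.filter fun i : Fin (2 * r) => r ≤ (i : ℕ)).image g = F := by
  refine ⟨fun i => if hi : i.val < r then E.orderEmbOfFin cE ⟨i, hi⟩
    else F.orderEmbOfFin cF ⟨i - r, by omega⟩, fun i j hij => ?_, ?_, ?_⟩
  · rw [Fin.lt_def] at hij
    dsimp only
    split_ifs with hi hj hj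
    · exact (E.orderEmbOfFin cE).strictMono (Fin.lt_def.mpr hij)
    · exact hEF _ (E.orderEmbOfFin_mem cE _) _ (F.orderEmbOfFin_mem cF _)
    · omega
    · exact (F.orderEmbOfFin cF).strictMono (Fin.lt_def.mpr (by simp only; omega))
  · ext x
    simp only [Finset.mem_image, Finset.mem_filter, Finset.mem_univ, true_and]
    constructor
    · rintro ⟨i, hi, rfl⟩
      simp only [dif_pos hi, Finset.orderEmbOfFin_mem]
    · intro hx
      obtain ⟨j, rfl⟩ : x ∈ Set.range (E.orderEmbOfFin cE) := by simpa using hx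
      exact ⟨⟨j, by omega⟩, j.isLt, by simp⟩
  · ext x
    simp only [Finset.mem_image, Finset.mem_filter, Finset.mem_univ, true_and]
    constructor
    · rintro ⟨i, hi, rfl⟩
      simp only [dif_neg (not_lt.mpr hi), Finset.orderEmbOfFin_mem]
    · intro hx
      obtain ⟨j, rfl⟩ : x ∈ Set.range (F.orderEmbOfFin cF) := by simpa using hx
      exact ⟨⟨r + j, by omega⟩, by simp, by simp⟩

lemma Finset.exists_subset_card_eq_of_mem_of_mem {α : Type*} [DecidableEq α] {S : Finset α}
    {a b : α} {k : ℕ} (ha : a ∈ S) (hb : b ∈ S) (hab : a ≠ b) (hk : 2 ≤ k) (hS : k ≤ S.card) :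
    ∃ e ⊆ S, e.card = k ∧ a ∈ e ∧ b ∈ e := by
  obtain ⟨e, hpe, heS, ce⟩ := Finset.exists_subsuperset_card_eq
    (Finset.insert_subset ha (Finset.singleton_subset_iff.mpr hb))
    (by rw [Finset.card_pair hab]; exact hk) hS
  exact ⟨e, heS, ce, hpe (by simp), hpe (by simp)⟩

section

variable {n r : ℕ} [NeZero n]

lemma separated_of_cyclicSorted {f : Fin (2 * r) → Fin n} (hr : 0 < r)
    (hf : CyclicSorted (List.ofFn f)) :
    Separated ((Finset.univ.filter fun i : Fin (2 * r) => (i : ℕ) < r).image f)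
      ((Finset.univ.filter fun i : Fin (2 * r) => r ≤ (i : ℕ)).image f) := by
  have : NeZero (2 * r) := ⟨by omega⟩
  have hmem : ∀ i, f i ∈ arcCC (f 0) (f ⟨r - 1, by omega⟩) ↔ i.val < r := fun i => by
    rw [mem_arcCC_iff, hf.strictMono_val_sub.le_iff_le, Fin.le_def]
    change i.val ≤ r - 1 ↔ _
    omega
  refine ⟨f 0, f ⟨r - 1, by omega⟩, ?_, ?_⟩
  · simp only [Finset.subset_iff, Finset.mem_image, Finset.mem_filter, Finset.mem_univ, true_and]
    rintro _ ⟨i, hi, rfl⟩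
    exact (hmem i).mpr hi
  · simp only [Finset.subset_iff, Finset.mem_image, Finset.mem_filter, Finset.mem_univ, true_and]
    rintro _ ⟨i, hi, rfl⟩
    rw [mem_arcOO_iff_notMem_arcCC, hmem]
    omega

lemma exists_separated_of_hasCopy {S : Finset (Finset (Fin n))} (hr : 0 < r)
    (hc : HasCopy (M1r r) S) : ∃ e ∈ S, ∃ h ∈ S, e.card = r ∧ h.card = r ∧ Separated e h := by
  obtain ⟨f, finj, hcs, fim⟩ := hc
  exact ⟨_, fim _ (Finset.mem_insert_self _ _), _,
    fim _ (Finset.mem_insert_of_mem (Finset.mem_singleton_self _)),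
    (Finset.card_image_of_injective _ finj).trans card_filter_val_lt_two_mul,
    (Finset.card_image_of_injective _ finj).trans card_filter_le_val_two_mul,
    separated_of_cyclicSorted hr hcs⟩

lemma hasCopy_of_separated {S : Finset (Finset (Fin n))} {e h : Finset (Fin n)} (hr : 0 < r)
    (he : e ∈ S) (hh : h ∈ S) (ce : e.card = r) (ch : h.card = r) (hs : Separated e h) :
    HasCopy (M1r r) S := by
  obtain ⟨a, b, hea, hhb⟩ := hs
  have hsep : ∀ x ∈ e.image (· - a), ∀ y ∈ h.image (· - a), x < y := by
    simp only [Finset.mem_image]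
    rintro _ ⟨x, hx, rfl⟩ _ ⟨y, hy, rfl⟩
    have hx' := mem_arcCC_iff.mp (hea hx)
    have hy' := hhb hy
    rw [mem_arcOO_iff_notMem_arcCC, mem_arcCC_iff] at hy'
    exact Fin.lt_def.mpr (by omega)
  obtain ⟨g, hg, hgE, hgF⟩ := exists_strictMono_concat
    ((Finset.card_image_of_injective _ sub_left_injective).trans ce)
    ((Finset.card_image_of_injective _ sub_left_injective).trans ch) hsep
  have hshift : ∀ s : Finset (Fin n), (s.image (· - a)).image (· + a) = s := fun s => by
    simp [Finset.image_image, Function.comp_def]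
  have hfE : (Finset.univ.filter fun i : Fin (2 * r) => (i : ℕ) < r).image ((· + a) ∘ g) = e := by
    rw [← Finset.image_image, hgE, hshift]
  have hfF : (Finset.univ.filter fun i : Fin (2 * r) => r ≤ (i : ℕ)).image ((· + a) ∘ g) = h := by
    rw [← Finset.image_image, hgF, hshift]
  have : NeZero (M1r r).m := ⟨by change 2 * r ≠ 0; omega⟩
  refine ⟨(· + a) ∘ g, fun i j hij => hg.injective (add_right_cancel hij),
    cyclicSorted_ofFn_of_strictMono (c := a) fun i j hij => ?_, fun ed hed => ?_⟩
  · show (g i + a - a).val < (g j + a - a).val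
    simpa only [add_sub_cancel_right] using Fin.lt_def.mp (hg hij)
  · rcases Finset.mem_insert.mp hed with rfl | hed
    · exact hfE ▸ he
    · exact Finset.mem_singleton.mp hed ▸ hfF ▸ hh

end

/-- Saturation for `M_1^{(r)}`, with copies of `M_1^{(r)}` replaced by separated pairs of edges. -/
structure SepSaturated {n : ℕ} (r : ℕ) (H : Finset (Finset (Fin n))) : Prop where
  card_eq : ∀ h ∈ H, h.card = r
  not_separated : ∀ e ∈ H, ∀ h ∈ H, ¬ Separated e h
  exists_separated : ∀ e : Finset (Fin n), e.card = r → e ∉ H → ∃ h ∈ H, Separated e h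

lemma SepSaturated.nonempty {n r : ℕ} {H : Finset (Finset (Fin n))} (hH : SepSaturated r H)
    (hrn : r ≤ n) : H.Nonempty := by
  obtain ⟨e, -, ce⟩ := Finset.exists_subset_card_eq (s := (Finset.univ : Finset (Fin n))) (n := r)
    (by rwa [Finset.card_univ, Fintype.card_fin])
  by_cases he : e ∈ H
  · exact ⟨e, he⟩
  · obtain ⟨h, hh, -⟩ := hH.exists_separated e ce he
    exact ⟨h, hh⟩

section

variable {n r : ℕ} [NeZero n] {H : Finset (Finset (Fin n))}

lemma IsSat.sepSaturated (hr : 0 < r) (hH : IsSat (M1r r) r H) : SepSaturated r H := by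
  obtain ⟨hcard, hfree, hsat⟩ := hH
  have not_sep : ∀ e ∈ H, ∀ h ∈ H, ¬ Separated e h := fun e he h hh hs =>
    hfree (hasCopy_of_separated hr he hh (hcard e he) (hcard h hh) hs)
  refine ⟨hcard, not_sep, fun e ce he => ?_⟩
  have hne : e.Nonempty := Finset.card_pos.mp (by omega)
  obtain ⟨e₁, he₁, h₁, hh₁, -, -, hs⟩ := exists_separated_of_hasCopy hr (hsat e ce he)
  rcases Finset.mem_insert.mp he₁ with rfl | he₁H <;>
    rcases Finset.mem_insert.mp hh₁ with rfl | hh₁H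
  · exact absurd hs.disjoint (by simpa using hne.ne_empty)
  · exact ⟨h₁, hh₁H, hs⟩
  · exact ⟨e₁, he₁H, hs.symm hne⟩
  · exact absurd hs (not_sep e₁ he₁H h₁ hh₁H)

lemma SepSaturated.neg (hH : SepSaturated r H) : SepSaturated r (-H) where
  card_eq h hh := by rw [← Finset.card_neg]; exact hH.card_eq _ (Finset.mem_neg'.mp hh)
  not_separated e he h hh hs :=
    hH.not_separated _ (Finset.mem_neg'.mp he) _ (Finset.mem_neg'.mp hh) hs.neg
  exists_separated e ce he := by
    obtain ⟨h, hh, hs⟩ := hH.exists_separated (-e) (by rwa [Finset.card_neg])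
      (fun h' => he (Finset.mem_neg'.mpr h'))
    exact ⟨-h, Finset.mem_neg'.mpr (by rwa [neg_neg]), by simpa using hs.neg⟩

lemma SepSaturated.mem_of_forall_not_subset_arcOO (hH : SepSaturated r H) {v t : Fin n}
    (hvt : v ≠ t) (h₁ : ∀ h ∈ H, ¬ h ⊆ arcOO v t) (h₂ : ∀ h ∈ H, ¬ h ⊆ arcOO t v)
    {e : Finset (Fin n)} (ce : e.card = r) (hv : v ∈ e) (ht : t ∈ e) : e ∈ H := by
  by_contra he
  obtain ⟨h, hh, hs⟩ := hH.exists_separated e ce he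
  rcases hs.subset_arcOO_or hv ht hvt with hsub | hsub
  exacts [h₁ h hh hsub, h₂ h hh hsub]

lemma SepSaturated.mem_of_subset_arcCC (hH : SepSaturated r H) {v t : Fin n} (hvt : v ≠ t)
    {A B : Finset (Fin n)} (hA : A ∈ H) (hAs : A ⊆ arcCC v t) (hB : B ∈ H) (hBs : B ⊆ arcCC t v)
    {e : Finset (Fin n)} (ce : e.card = r) (hv : v ∈ e) (ht : t ∈ e) : e ∈ H :=
  hH.mem_of_forall_not_subset_arcOO hvt
    (fun h hh hsub => hH.not_separated B hB h hh ⟨t, v, hBs, hsub⟩)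
    (fun h hh hsub => hH.not_separated A hA h hh ⟨v, t, hAs, hsub⟩) ce hv ht

lemma IsRho.eq {v j j' : Fin n} (hj : IsRho H v j) (hj' : IsRho H v j') : j = j' := by
  have key : ∀ j j', IsRho H v j → IsRho H v j' → ¬ (j - v).val < (j' - v).val := by
    rintro j j' ⟨⟨h, hh, hv, hsub⟩, -⟩ ⟨-, hmin⟩ hlt
    have hj'v : j' ≠ v := by rintro rfl; simp at hlt
    refine hmin ⟨h, hh, hv, hsub.trans fun x hx => ?_⟩
    rw [mem_arcCC_iff] at hx ⊢
    rw [Fin.val_sub_one_sub hj'v]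
    omega
  have := key j j' hj hj'
  have := key j' j hj' hj
  exact sub_left_injective (show j - v = j' - v from Fin.ext (by omega))

lemma exists_mem_subset_arcCC_of_forall_mem (hr : 2 ≤ r) {v u : Fin n} (huv : u ≠ v)
    (hru : r ≤ (u - v).val + 1)
    (hall : ∀ e : Finset (Fin n), e.card = r → v ∈ e → u ∈ e → e ∈ H) :
    ∃ h ∈ H, v ∈ h ∧ h ⊆ arcCC v u := by
  obtain ⟨e, heS, ce, hve, hue⟩ := Finset.exists_subset_card_eq_of_mem_of_mem
    left_mem_arcCC right_mem_arcCC huv.symm hr (by rwa [card_arcCC])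
  exact ⟨e, hall e ce hve hue, hve, heS⟩

lemma SepSaturated.mem_of_forall_val_sub_le (hH : SepSaturated r H) {v t : Fin n} (htv : t ≠ v)
    {B : Finset (Fin n)} (hB : B ∈ H) (hBs : B ⊆ arcCC v t)
    (hmin : ∀ j, ∀ h ∈ H, h ⊆ arcCC v j → (t - v).val ≤ (j - v).val)
    {e : Finset (Fin n)} (ce : e.card = r) (hv : v ∈ e) (ht : t ∈ e) : e ∈ H :=
  hH.mem_of_forall_not_subset_arcOO htv.symm
    (fun h hh hsub => by
      have hle := hmin _ h hh (hsub.trans (arcOO_subset_arcCC_sub_one htv))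
      have hpos : (t - v).val ≠ 0 := fun h₀ => htv (sub_eq_zero.mp (Fin.ext h₀))
      rw [Fin.val_sub_one_sub htv] at hle
      omega)
    (fun h hh hsub => hH.not_separated B hB h hh ⟨v, t, hBs, hsub⟩) ce hv ht

lemma SepSaturated.val_sub_le_of_forall_val_sub_le (hH : SepSaturated r H) (hr : 2 ≤ r)
    (hn : 2 * r ≤ n) {v t : Fin n}
    (hmin : ∀ j, ∀ h ∈ H, h ⊆ arcCC v j → (t - v).val ≤ (j - v).val) : (t - v).val ≤ n - r := by
  by_contra! hlarge
  -- then the point `u` at distance `n - r` from `v` would be a better candidate than `t`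
  set u := v + ⟨n - r, by omega⟩
  have hu : (u - v).val = n - r := by simp [u]
  have huv : u ≠ v := by rintro h; rw [h, sub_self, Fin.val_zero] at hu; omega
  have hall : ∀ e : Finset (Fin n), e.card = r → v ∈ e → u ∈ e → e ∈ H := fun e ce hv hu' =>
    hH.mem_of_forall_not_subset_arcOO huv.symm
      (fun h hh hsub => by
        have := hmin _ h hh (hsub.trans (arcOO_subset_arcCC_sub_one huv))
        rw [Fin.val_sub_one_sub huv] at this
        omega)
      (fun h hh hsub => by
        have := Finset.card_le_card hsub
        rw [hH.card_eq h hh, card_arcOO, hu] at this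
        omega) ce hv hu'
  obtain ⟨h, hh, -, hsub⟩ := exists_mem_subset_arcCC_of_forall_mem hr huv (by omega) hall
  have := hmin u h hh hsub
  omega

lemma SepSaturated.exists_isRho (hH : SepSaturated r H) (hr : 2 ≤ r) (hn : 2 * r ≤ n)
    (v : Fin n) : ∃ t, IsRho H v t ∧ r - 1 ≤ (t - v).val ∧ (t - v).val ≤ n - r ∧
      ∀ e : Finset (Fin n), e.card = r → v ∈ e → t ∈ e → e ∈ H := by
  classical
  obtain ⟨h₀, hh₀⟩ := hH.nonempty (by omega)
  -- `t` is the point closest to `v` (clockwise) such that some edge lies in `[v, t]`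
  obtain ⟨t, ht, hmin⟩ := Finset.exists_min_image
    (Finset.univ.filter fun j => ∃ h ∈ H, h ⊆ arcCC v j) (fun j => (j - v).val)
    ⟨v - 1, Finset.mem_filter.mpr ⟨Finset.mem_univ _, h₀, hh₀, fun x _ => by
      rw [mem_arcCC_iff, sub_sub_cancel_left, Fin.val_neg_one_of_neZero]; omega⟩⟩
  obtain ⟨B, hB, hBs⟩ := (Finset.mem_filter.mp ht).2
  replace hmin : ∀ j, ∀ h ∈ H, h ⊆ arcCC v j → (t - v).val ≤ (j - v).val :=
    fun j h hh hsub => hmin j (Finset.mem_filter.mpr ⟨Finset.mem_univ _, h, hh, hsub⟩)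
  have htr : r - 1 ≤ (t - v).val := by
    have := Finset.card_le_card hBs
    rw [hH.card_eq B hB, card_arcCC] at this
    omega
  have htv : t ≠ v := by rintro rfl; simp at htr; omega
  have hall : ∀ e : Finset (Fin n), e.card = r → v ∈ e → t ∈ e → e ∈ H :=
    fun e ce hv ht => hH.mem_of_forall_val_sub_le htv hB hBs hmin ce hv ht
  refine ⟨t, ⟨exists_mem_subset_arcCC_of_forall_mem hr htv (by omega) hall,
    fun ⟨h, hh, _, hsub⟩ => ?_⟩, htr, hH.val_sub_le_of_forall_val_sub_le hr hn hmin, hall⟩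
  have := hmin _ h hh hsub
  rw [Fin.val_sub_one_sub htv] at this
  omega

lemma exists_edge_subset_arcCC_neg {v a b : Fin n} :
    (∃ h ∈ -H, -v ∈ h ∧ h ⊆ arcCC (-b) (-a)) ↔ ∃ h ∈ H, v ∈ h ∧ h ⊆ arcCC a b := by
  constructor
  · rintro ⟨h, hh, hv, hsub⟩
    refine ⟨-h, Finset.mem_neg'.mp hh, Finset.mem_neg'.mpr hv, ?_⟩
    simpa only [neg_arcCC, neg_neg] using Finset.neg_subset_neg hsub
  · rintro ⟨h, hh, hv, hsub⟩
    exact ⟨-h, Finset.mem_neg'.mpr (by rwa [neg_neg]), Finset.mem_neg'.mpr (by rwa [neg_neg]),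
      neg_arcCC a b ▸ Finset.neg_subset_neg hsub⟩

lemma isLam_iff_isRho_neg {v j : Fin n} : IsLam H v j ↔ IsRho (-H) (-v) (-j) := by
  unfold IsLam IsRho
  rw [exists_edge_subset_arcCC_neg, show -j - 1 = -(j + 1) by abel, exists_edge_subset_arcCC_neg]

lemma IsLam.eq {v j j' : Fin n} (hj : IsLam H v j) (hj' : IsLam H v j') : j = j' :=
  neg_injective ((isLam_iff_isRho_neg.mp hj).eq (isLam_iff_isRho_neg.mp hj'))

lemma SepSaturated.exists_isLam (hH : SepSaturated r H) (hr : 2 ≤ r) (hn : 2 * r ≤ n)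
    (v : Fin n) : ∃ l, IsLam H v l ∧ r - 1 ≤ (v - l).val ∧ (v - l).val ≤ n - r ∧
      ∀ e : Finset (Fin n), e.card = r → v ∈ e → l ∈ e → e ∈ H := by
  obtain ⟨t, ht, h₁, h₂, hall⟩ := hH.neg.exists_isRho hr hn (-v)
  have hvt : v - -t = t - -v := by abel
  refine ⟨-t, isLam_iff_isRho_neg.mpr (by rwa [neg_neg]), hvt ▸ h₁, hvt ▸ h₂,
    fun e ce hv hl => ?_⟩
  have := hall (-e) (by rwa [Finset.card_neg]) (Finset.mem_neg'.mpr (by rwa [neg_neg]))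
    (Finset.mem_neg'.mpr hl)
  simpa using Finset.mem_neg'.mp this

lemma IsRho.val_sub_le_of_forall_mem {v ρ u : Fin n} (hρ : IsRho H v ρ) (hr : 2 ≤ r)
    (hu : r - 1 ≤ (u - v).val) (hall : ∀ e : Finset (Fin n), e.card = r → v ∈ e → u ∈ e → e ∈ H) :
    (ρ - v).val ≤ (u - v).val := by
  by_contra! hlt
  have hρv : ρ ≠ v := by rintro rfl; simp at hlt
  have huv : u ≠ v := by rintro rfl; simp at hu; omega
  have hmem : u ∈ arcCC v (ρ - 1) := by
    rw [mem_arcCC_iff, Fin.val_sub_one_sub hρv]; omega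
  obtain ⟨e, heS, ce, hve, hue⟩ := Finset.exists_subset_card_eq_of_mem_of_mem left_mem_arcCC hmem
    huv.symm hr (by rw [card_arcCC, Fin.val_sub_one_sub hρv]; omega)
  exact hρ.2 ⟨e, hall e ce hve hue, hve, heS⟩

lemma SepSaturated.exists_rho_lam (hH : SepSaturated r H) (hr : 2 ≤ r) (hn : 2 * r ≤ n)
    (v : Fin n) : ∃ ρ l, IsRho H v ρ ∧ IsLam H v l ∧ r - 1 ≤ (ρ - v).val ∧
      (ρ - v).val ≤ n - r ∧ r ≤ (l - v).val ∧ (l - v).val ≤ n - r + 1 ∧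
      (ρ - v).val ≤ (l - v).val := by
  obtain ⟨ρ, hρ, hρ₁, hρ₂, -⟩ := hH.exists_isRho hr hn v
  obtain ⟨l, hl, hl₁, hl₂, hall⟩ := hH.exists_isLam hr hn v
  have hlv : l ≠ v := by rintro rfl; simp at hl₁; omega
  have hsum := Fin.val_sub_add_val_sub hlv
  exact ⟨ρ, l, hρ, hl, hρ₁, hρ₂, by omega, by omega,
    hρ.val_sub_le_of_forall_mem hr (by omega) hall⟩

lemma SepSaturated.mem_of_mem_arcCC_rho_lam (hH : SepSaturated r H) {v ρ l j : Fin n}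
    (hρ : IsRho H v ρ) (hl : IsLam H v l) (hρv : 0 < (ρ - v).val)
    (hρl : (ρ - v).val ≤ (l - v).val) (hj : j ∈ arcCC ρ l) {e : Finset (Fin n)}
    (ce : e.card = r) (hve : v ∈ e) (hje : j ∈ e) : e ∈ H := by
  obtain ⟨⟨A, hA, -, hAs⟩, -⟩ := hρ
  obtain ⟨⟨B, hB, -, hBs⟩, -⟩ := hl
  rw [mem_arcCC_iff_of_le v hρl] at hj
  have hjv : j ≠ v := by rintro rfl; rw [sub_self, Fin.val_zero] at hj; omega
  have hsum := Fin.val_sub_add_val_sub hjv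
  have hlj : (l - j).val = (l - v).val - (j - v).val := by
    rw [Fin.val_sub_eq_ite_of_base v j l, if_pos hj.2]
  have hAj : arcCC v ρ ⊆ arcCC v j := arcCC_subset_arcCC v le_rfl (by simp) hj.1
  have hBj : arcCC l v ⊆ arcCC j v := arcCC_subset_arcCC j (by simp) (by omega) le_rfl
  exact hH.mem_of_subset_arcCC hjv.symm hA (hAs.trans hAj) hB (hBs.trans hBj) ce hve hje

end

open Fin.NatCast in
theorem lam_rho_basic (n r : ℕ) [NeZero n] (hr : 2 ≤ r) (hn : 2 * r ≤ n)
    (H : Finset (Finset (Fin n))) (hH : IsSat (M1r r) r H) :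
    (∀ v : Fin n, (∃ h ∈ H, v ∈ h) ∧ (∃! j, IsLam H v j) ∧ (∃! j, IsRho H v j)) ∧
    (∀ v j : Fin n, IsLam H v j →
      j ∉ arcCC (v - ((r - 2 : ℕ) : Fin n)) (v + ((r - 1 : ℕ) : Fin n))) ∧
    (∀ v j : Fin n, IsRho H v j →
      j ∉ arcCC (v - ((r - 1 : ℕ) : Fin n)) (v + ((r - 2 : ℕ) : Fin n))) ∧
    (∀ v l rh : Fin n, IsLam H v l → IsRho H v rh → v ∈ arcOO l rh) ∧
    (∀ v l rh : Fin n, IsLam H v l → IsRho H v rh →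
      ∀ j ∈ arcCC rh l, ∀ e : Finset (Fin n), e.card = r → v ∈ e → j ∈ e → e ∈ H) := by
  have hS := hH.sepSaturated (by omega)
  have key := hS.exists_rho_lam hr hn
  refine ⟨fun v => ?_, fun v j hj => ?_, fun v j hj => ?_, fun v l rh hl hrh => ?_,
    fun v l rh hl hrh => ?_⟩ <;> obtain ⟨ρ, l', hρ, hl', hρ₁, hρ₂, hl₁, hl₂, hρl⟩ := key v
  · obtain ⟨h, hh, hv, -⟩ := hρ.1
    exact ⟨⟨h, hh, hv⟩, ⟨l', hl', fun j hj => hj.eq hl'⟩, ⟨ρ, hρ, fun j hj => hj.eq hρ⟩⟩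
  · rw [hj.eq hl', mem_arcCC_sub_add_iff (by omega)]; omega
  · rw [hj.eq hρ, mem_arcCC_sub_add_iff (by omega)]; omega
  · rw [hl.eq hl', hrh.eq hρ]
    exact mem_arcOO_of_val_sub_le (by omega) hρl
  · rw [hl.eq hl', hrh.eq hρ]
    exact fun j hj e ce hve hje => hS.mem_of_mem_arcCC_rho_lam hρ hl' (by omega) hρl hj ce hve hje
end

section
/- Let n ≥ 1 and let H be a family of 3-element subsets of {1, …, n} such that every element of {1, …, n} lies in some member of H, and every member h ∈ H contains an element v whose degree in H (the number of members of H containing v) is at least 2. Then |H| ≥ 2n/5. -/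
open Finset

-- STATEMENT 19
theorem cover_degree_lower (n : ℕ) (hn : 1 ≤ n) (H : Finset (Finset (Fin n)))
    (hcard : ∀ h ∈ H, h.card = 3)
    (hcover : ∀ v : Fin n, ∃ h ∈ H, v ∈ h)
    (hdeg : ∀ h ∈ H, ∃ v ∈ h, 2 ≤ (H.filter (fun g => v ∈ g)).card) :
    (2 * n : ℝ) / 5 ≤ (H.card : ℝ) := by
  classical
  set deg : Fin n → ℕ := fun v => (H.filter (fun g => v ∈ g)).card with hdegdef
  have hdc : ∀ S : Finset (Fin n), ∑ v ∈ S, deg v = ∑ e ∈ H, (e ∩ S).card := by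
    intro S
    simp only [hdegdef, Finset.card_filter]
    rw [Finset.sum_comm]
    refine Finset.sum_congr rfl fun e _ => ?_
    rw [Finset.inter_comm, ← Finset.filter_mem_eq_inter, Finset.card_filter]
  set D : Finset (Fin n) := Finset.univ.filter (fun v => 2 ≤ deg v) with hDdef
  have htotal : ∑ v ∈ (Finset.univ : Finset (Fin n)), deg v = 3 * H.card := by
    rw [hdc Finset.univ]
    simp only [Finset.inter_univ]
    rw [Finset.sum_congr rfl hcard, Finset.sum_const, smul_eq_mul, mul_comm]
  have hsplit : ∑ v ∈ D, deg v + ∑ v ∈ Dᶜ, deg v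
      = ∑ v ∈ (Finset.univ : Finset (Fin n)), deg v :=
    Finset.sum_add_sum_compl D deg
  have hD2 : 2 * D.card ≤ ∑ v ∈ D, deg v := by
    calc 2 * D.card = ∑ _v ∈ D, 2 := by rw [Finset.sum_const, smul_eq_mul, mul_comm]
    _ ≤ ∑ v ∈ D, deg v :=
      Finset.sum_le_sum fun v hv => (Finset.mem_filter.mp hv).2
  have hDk : H.card ≤ ∑ v ∈ D, deg v := by
    rw [hdc D]
    calc H.card = ∑ _e ∈ H, 1 := by simp
    _ ≤ ∑ e ∈ H, (e ∩ D).card := by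
      refine Finset.sum_le_sum fun e he => ?_
      obtain ⟨v, hv, h2⟩ := hdeg e he
      have : v ∈ e ∩ D := Finset.mem_inter.mpr ⟨hv, Finset.mem_filter.mpr ⟨Finset.mem_univ v, h2⟩⟩
      exact Finset.card_pos.mpr ⟨v, this⟩
  have hDc : Dᶜ.card ≤ ∑ v ∈ Dᶜ, deg v := by
    calc Dᶜ.card = ∑ _v ∈ Dᶜ, 1 := by simp
    _ ≤ ∑ v ∈ Dᶜ, deg v := by
      refine Finset.sum_le_sum fun v _ => ?_
      obtain ⟨h, hh, hvh⟩ := hcover v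
      exact Finset.card_pos.mpr ⟨h, Finset.mem_filter.mpr ⟨hh, hvh⟩⟩
  have hcards : D.card + Dᶜ.card = n := by
    rw [Finset.card_add_card_compl, Fintype.card_fin]
  have key : 2 * n ≤ 5 * H.card := by omega
  rw [div_le_iff₀ (by norm_num : (0:ℝ) < 5)]
  have key2 : 2 * n ≤ H.card * 5 := by omega
  exact_mod_cast key2
end
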